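/- arXiv:1206.2596 — 11 statements merged into one kernel-verified Lean document; each statement's English description precedes it below -/
import Mathlib

section
/- Let d be a real number and let x₁, x₂, x₃ : [0,T) → ℝ be continuously differentiable functions with strictly positive values satisfying the Ricci flow ODE xᵢ'(t) = −2·rᵢ(t)·xᵢ(t), where rᵢ(t) = (d·xᵢ(t)² − d·xⱼ(t)² − d·xₖ(t)² + (10d−8)·xⱼ(t)·xₖ(t))/(2·x₁(t)·x₂(t)·x₃(t)) for {i,j,k} = {1,2,3}. If x₁(0) = x₂(0), then x₁(t) = x₂(t) for all t ∈ [0,T). -/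
/-- The locus x₁ = x₂ is invariant under the Ricci flow ODE on [0,T). -/
theorem stmt_4 (d T : ℝ) (x₁ x₂ x₃ r₁ r₂ r₃ : ℝ → ℝ)
    (hpos : ∀ t ∈ Set.Ico 0 T, 0 < x₁ t ∧ 0 < x₂ t ∧ 0 < x₃ t)
    (hC1 : ContDiffOn ℝ 1 x₁ (Set.Ico 0 T) ∧ ContDiffOn ℝ 1 x₂ (Set.Ico 0 T) ∧
      ContDiffOn ℝ 1 x₃ (Set.Ico 0 T))
    (hr1 : ∀ t, r₁ t = (d*(x₁ t)^2 - d*(x₂ t)^2 - d*(x₃ t)^2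
      + (10*d-8)*(x₂ t)*(x₃ t))/(2*(x₁ t)*(x₂ t)*(x₃ t)))
    (hr2 : ∀ t, r₂ t = (d*(x₂ t)^2 - d*(x₁ t)^2 - d*(x₃ t)^2
      + (10*d-8)*(x₁ t)*(x₃ t))/(2*(x₁ t)*(x₂ t)*(x₃ t)))
    (hr3 : ∀ t, r₃ t = (d*(x₃ t)^2 - d*(x₁ t)^2 - d*(x₂ t)^2
      + (10*d-8)*(x₁ t)*(x₂ t))/(2*(x₁ t)*(x₂ t)*(x₃ t)))
    (hode1 : ∀ t ∈ Set.Ico 0 T, HasDerivAt x₁ (-2 * r₁ t * x₁ t) t)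
    (hode2 : ∀ t ∈ Set.Ico 0 T, HasDerivAt x₂ (-2 * r₂ t * x₂ t) t)
    (hode3 : ∀ t ∈ Set.Ico 0 T, HasDerivAt x₃ (-2 * r₃ t * x₃ t) t)
    (hinit : x₁ 0 = x₂ 0) :
    ∀ t ∈ Set.Ico 0 T, x₁ t = x₂ t := by
  set g : ℝ → ℝ := fun t => d*((x₃ t)^2 - (x₁ t + x₂ t)^2)/((x₁ t)*(x₂ t)*(x₃ t)) with hg
  set y : ℝ → ℝ := fun t => x₁ t - x₂ t with hy
  intro t₀ ht₀
  obtain ⟨ht₀0, ht₀T⟩ := ht₀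
  have hsub : Set.Icc (0:ℝ) t₀ ⊆ Set.Ico 0 T := fun s hs =>
    ⟨hs.1, lt_of_le_of_lt hs.2 ht₀T⟩
  -- derivative identity
  have hderiv : ∀ s ∈ Set.Ico (0:ℝ) T, HasDerivAt y (g s * y s) s := by
    intro s hs
    obtain ⟨h1, h2, h3⟩ := hpos s hs
    have := (hode1 s hs).sub (hode2 s hs)
    refine this.congr_deriv ?_
    rw [hr1, hr2, hg]
    field_simp
    ring
  -- continuity of g on Icc 0 t₀
  have hc1 := hC1.1.continuousOn
  have hc2 := hC1.2.1.continuousOn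
  have hc3 := hC1.2.2.continuousOn
  have hgc : ContinuousOn g (Set.Icc 0 t₀) := by
    apply ContinuousOn.div
    · exact continuousOn_const.mul (((hc3.mono hsub).pow 2).sub
        (((hc1.mono hsub).add (hc2.mono hsub)).pow 2))
    · exact ((hc1.mono hsub).mul (hc2.mono hsub)).mul (hc3.mono hsub)
    · intro s hs
      obtain ⟨h1, h2, h3⟩ := hpos s (hsub hs)
      positivity
  obtain ⟨K, hK⟩ := (isCompact_Icc (a := (0:ℝ)) (b := t₀)).exists_bound_of_continuousOn hgc
  have hyc : ContinuousOn y (Set.Icc 0 t₀) :=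
    ((hc1.sub hc2).mono hsub)
  have key : ∀ s ∈ Set.Icc (0:ℝ) t₀, ‖y s‖ ≤ gronwallBound 0 K 0 (s - 0) := by
    apply norm_le_gronwallBound_of_norm_deriv_right_le hyc
    · intro s hs
      exact (hderiv s (hsub (Set.Ico_subset_Icc_self hs))).hasDerivWithinAt
    · simp [hy, hinit]
    · intro s hs
      have hb := hK s (Set.Ico_subset_Icc_self hs)
      calc ‖g s * y s‖ = ‖g s‖ * ‖y s‖ := norm_mul _ _
        _ ≤ K * ‖y s‖ + 0 := by
            simp only [add_zero]
            exact mul_le_mul_of_nonneg_right hb (norm_nonneg _)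
  have := key t₀ ⟨ht₀0, le_refl _⟩
  rw [gronwallBound_ε0] at this
  simp only [zero_mul] at this
  have h0 : y t₀ = 0 := norm_le_zero_iff.mp this
  simpa [hy, sub_eq_zero] using h0
end

section
/- Let d be a real number and let x₁, x₂, x₃ : [0,T) → ℝ be continuously differentiable functions with strictly positive values satisfying the Ricci flow ODE xᵢ'(t) = −2·rᵢ(t)·xᵢ(t), where rᵢ(t) = (d·xᵢ(t)² − d·xⱼ(t)² − d·xₖ(t)² + (10d−8)·xⱼ(t)·xₖ(t))/(2·x₁(t)·x₂(t)·x₃(t)) for {i,j,k} = {1,2,3}. If x₂(0) > x₁(0) > x₃(0) > 0, then x₂(t) > x₁(t) > x₃(t) > 0 for all t ∈ [0,T). -/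
open Set intervalIntegral MeasureTheory

lemma linear_ode_pos (T : ℝ) (u g : ℝ → ℝ)
    (hg : ContinuousOn g (Set.Ico 0 T))
    (hu : ∀ t ∈ Set.Ico 0 T, HasDerivAt u (g t * u t) t)
    (h0 : 0 < u 0) : ∀ t ∈ Set.Ico 0 T, 0 < u t := by
  rintro t ⟨ht0, htT⟩
  rcases eq_or_lt_of_le ht0 with h | h
  · simpa [← h] using h0
  -- work on Icc 0 t
  have hsub : Set.Icc 0 t ⊆ Set.Ico 0 T := fun s hs => ⟨hs.1, lt_of_le_of_lt hs.2 htT⟩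
  set F : ℝ → ℝ := fun x => ∫ s in (0:ℝ)..x, g s with hF
  set w : ℝ → ℝ := fun x => u x * Real.exp (-F x) with hw
  have hgI : ContinuousOn g (Set.Icc 0 t) := hg.mono hsub
  have hint : MeasureTheory.IntegrableOn g (Set.uIcc 0 t) := by
    rw [Set.uIcc_of_le (le_of_lt h)]
    exact hgI.integrableOn_compact isCompact_Icc
  have hFcont : ContinuousOn F (Set.Icc 0 t) := by
    have := continuousOn_primitive_interval (f := g) (μ := MeasureTheory.volume)
      (a := 0) (b := t) hint
    rwa [Set.uIcc_of_le (le_of_lt h)] at this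
  have hucont : ContinuousOn u (Set.Icc 0 t) := fun s hs =>
    ((hu s (hsub hs)).continuousAt).continuousWithinAt
  have hwcont : ContinuousOn w (Set.Icc 0 t) :=
    hucont.mul ((hFcont.neg).rexp)
  -- derivative zero on interior
  have hIoosub : Set.Ioo 0 t ⊆ Set.Ioo 0 T := fun s hs => ⟨hs.1, lt_trans hs.2 htT⟩
  have hgIoo : ContinuousOn g (Set.Ioo 0 T) := hg.mono Set.Ioo_subset_Ico_self
  have hwderiv : ∀ x ∈ Set.Ioo 0 t, HasDerivAt w 0 x := by
    intro x hx
    have hxT : x ∈ Set.Ioo 0 T := hIoosub hx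
    have hxIco : x ∈ Set.Ico 0 T := ⟨le_of_lt hxT.1, hxT.2⟩
    have hFd : HasDerivAt F (g x) x := by
      apply intervalIntegral.integral_hasDerivAt_right
      · apply (hgI.mono _).intervalIntegrable
        rw [Set.uIcc_of_le (le_of_lt hx.1)]
        exact Set.Icc_subset_Icc le_rfl (le_of_lt hx.2)
      · exact hgIoo.stronglyMeasurableAtFilter isOpen_Ioo x hxT
      · exact hgIoo.continuousAt (isOpen_Ioo.mem_nhds hxT)
    have hud : HasDerivAt u (g x * u x) x := hu x hxIco
    have hed : HasDerivAt (fun y => Real.exp (-F y)) (Real.exp (-F x) * (-g x)) x :=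
      (hFd.neg).exp
    have := hud.mul hed
    refine this.congr_deriv ?_
    ring
  have hwdiff : DifferentiableOn ℝ w (interior (Set.Icc 0 t)) := by
    rw [interior_Icc]
    exact fun x hx => ((hwderiv x hx).differentiableAt).differentiableWithinAt
  have hderiv0 : ∀ x ∈ interior (Set.Icc 0 t), deriv w x = 0 := by
    rw [interior_Icc]
    exact fun x hx => (hwderiv x hx).deriv
  have hmono : MonotoneOn w (Set.Icc 0 t) :=
    monotoneOn_of_deriv_nonneg (convex_Icc 0 t) hwcont hwdiff
      (fun x hx => le_of_eq (hderiv0 x hx).symm)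
  have hanti : AntitoneOn w (Set.Icc 0 t) :=
    antitoneOn_of_deriv_nonpos (convex_Icc 0 t) hwcont hwdiff
      (fun x hx => le_of_eq (hderiv0 x hx))
  have h0m : (0:ℝ) ∈ Set.Icc 0 t := ⟨le_rfl, le_of_lt h⟩
  have htm : t ∈ Set.Icc 0 t := ⟨le_of_lt h, le_rfl⟩
  have hle : w t ≤ w 0 := hanti h0m htm (le_of_lt h)
  have hge : w 0 ≤ w t := hmono h0m htm (le_of_lt h)
  have hwt : w t = w 0 := le_antisymm hle hge
  have hw0 : 0 < w 0 := by
    have : F 0 = 0 := by simp [hF]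
    simp only [hw, this, neg_zero, Real.exp_zero, mul_one]
    exact h0
  have hwtpos : 0 < w t := hwt ▸ hw0
  have hexp : 0 < Real.exp (-F t) := Real.exp_pos _
  have h1 : 0 < u t * Real.exp (-F t) := hwtpos
  nlinarith [h1, hexp]

/-- The region x₂ > x₁ > x₃ > 0 is invariant under the Ricci flow ODE on [0,T). -/
theorem stmt_5 (d T : ℝ) (x₁ x₂ x₃ r₁ r₂ r₃ : ℝ → ℝ)
    (hpos : ∀ t ∈ Set.Ico 0 T, 0 < x₁ t ∧ 0 < x₂ t ∧ 0 < x₃ t)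
    (hC1 : ContDiffOn ℝ 1 x₁ (Set.Ico 0 T) ∧ ContDiffOn ℝ 1 x₂ (Set.Ico 0 T) ∧
      ContDiffOn ℝ 1 x₃ (Set.Ico 0 T))
    (hr1 : ∀ t, r₁ t = (d*(x₁ t)^2 - d*(x₂ t)^2 - d*(x₃ t)^2
      + (10*d-8)*(x₂ t)*(x₃ t))/(2*(x₁ t)*(x₂ t)*(x₃ t)))
    (hr2 : ∀ t, r₂ t = (d*(x₂ t)^2 - d*(x₁ t)^2 - d*(x₃ t)^2
      + (10*d-8)*(x₁ t)*(x₃ t))/(2*(x₁ t)*(x₂ t)*(x₃ t)))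
    (hr3 : ∀ t, r₃ t = (d*(x₃ t)^2 - d*(x₁ t)^2 - d*(x₂ t)^2
      + (10*d-8)*(x₁ t)*(x₂ t))/(2*(x₁ t)*(x₂ t)*(x₃ t)))
    (hode1 : ∀ t ∈ Set.Ico 0 T, HasDerivAt x₁ (-2 * r₁ t * x₁ t) t)
    (hode2 : ∀ t ∈ Set.Ico 0 T, HasDerivAt x₂ (-2 * r₂ t * x₂ t) t)
    (hode3 : ∀ t ∈ Set.Ico 0 T, HasDerivAt x₃ (-2 * r₃ t * x₃ t) t)
    (hinit : x₂ 0 > x₁ 0 ∧ x₁ 0 > x₃ 0 ∧ x₃ 0 > 0) :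
    ∀ t ∈ Set.Ico 0 T, x₂ t > x₁ t ∧ x₁ t > x₃ t ∧ x₃ t > 0 := by
  obtain ⟨hC1₁, hC1₂, hC1₃⟩ := hC1
  have hc1 : ContinuousOn x₁ (Set.Ico 0 T) := hC1₁.continuousOn
  have hc2 : ContinuousOn x₂ (Set.Ico 0 T) := hC1₂.continuousOn
  have hc3 : ContinuousOn x₃ (Set.Ico 0 T) := hC1₃.continuousOn
  have hden : ∀ t ∈ Set.Ico 0 T, (x₁ t) * (x₂ t) * (x₃ t) ≠ 0 := by
    intro t ht
    obtain ⟨h1, h2, h3⟩ := hpos t ht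
    positivity
  -- first comparison : u = x₂ - x₁
  have hu : ∀ t ∈ Set.Ico 0 T, 0 < x₂ t - x₁ t := by
    apply linear_ode_pos T (fun s => x₂ s - x₁ s)
      (fun s => d*((x₃ s)^2 - (x₁ s + x₂ s)^2)/((x₁ s)*(x₂ s)*(x₃ s)))
    · exact (continuousOn_const.mul
        (((hc3.pow 2).sub ((hc1.add hc2).pow 2)))).div
        ((hc1.mul hc2).mul hc3) hden
    · intro t ht
      have h := (hode2 t ht).sub (hode1 t ht)
      refine h.congr_deriv ?_
      obtain ⟨h1, h2, h3⟩ := hpos t ht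
      rw [hr1 t, hr2 t]
      field_simp
      ring
    · exact sub_pos.mpr hinit.1
  -- second comparison : v = x₁ - x₃
  have hv : ∀ t ∈ Set.Ico 0 T, 0 < x₁ t - x₃ t := by
    apply linear_ode_pos T (fun s => x₁ s - x₃ s)
      (fun s => d*((x₂ s)^2 - (x₁ s + x₃ s)^2)/((x₁ s)*(x₂ s)*(x₃ s)))
    · exact (continuousOn_const.mul
        (((hc2.pow 2).sub ((hc1.add hc3).pow 2)))).div
        ((hc1.mul hc2).mul hc3) hden
    · intro t ht
      have h := (hode1 t ht).sub (hode3 t ht)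
      refine h.congr_deriv ?_
      obtain ⟨h1, h2, h3⟩ := hpos t ht
      rw [hr1 t, hr3 t]
      field_simp
      ring
    · exact sub_pos.mpr hinit.2.1
  intro t ht
  exact ⟨sub_pos.mp (hu t ht), sub_pos.mp (hv t ht), (hpos t ht).2.2⟩
end

section
/- Let d ∈ {2, 4, 8}, let x₁ = x₂ > 0 and x₃ > 0, set u = x₃/x₁, and define rᵢ = (d·xᵢ² − d·xⱼ² − d·xₖ² + (10d−8)·xⱼ·xₖ)/(2·x₁·x₂·x₃) for {i,j,k} = {1,2,3}. Then the quantity −2·u·(r₃ − r₁) is: strictly negative if 0 < u < 1; strictly positive if 1 < u < 4(d−1)/d; and strictly negative if u > 4(d−1)/d. -/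
/-- Sign trichotomy for the derivative −2u(r₃ − r₁) of the ratio u = x₃/x₁
along the Ricci flow on the locus x₁ = x₂. -/
theorem stmt_6 (d x₁ x₂ x₃ u r₁ r₂ r₃ : ℝ) (hd : d = 2 ∨ d = 4 ∨ d = 8)
    (h12 : x₁ = x₂) (h1 : 0 < x₁) (h3 : 0 < x₃) (hu : u = x₃ / x₁)
    (hr1 : r₁ = (d*x₁^2 - d*x₂^2 - d*x₃^2 + (10*d-8)*x₂*x₃)/(2*x₁*x₂*x₃))
    (hr2 : r₂ = (d*x₂^2 - d*x₁^2 - d*x₃^2 + (10*d-8)*x₁*x₃)/(2*x₁*x₂*x₃))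
    (hr3 : r₃ = (d*x₃^2 - d*x₁^2 - d*x₂^2 + (10*d-8)*x₁*x₂)/(2*x₁*x₂*x₃)) :
    (0 < u ∧ u < 1 → -2*u*(r₃ - r₁) < 0) ∧
    (1 < u ∧ u < 4*(d-1)/d → 0 < -2*u*(r₃ - r₁)) ∧
    (4*(d-1)/d < u → -2*u*(r₃ - r₁) < 0) := by
  subst h12 hr1 hr2 hr3 hu
  have h1' : x₁ ≠ 0 := ne_of_gt h1
  have h3' : x₃ ≠ 0 := ne_of_gt h3
  have key : -2*(x₃/x₁)*((d*x₃^2 - d*x₁^2 - d*x₁^2 + (10*d-8)*x₁*x₁)/(2*x₁*x₁*x₃)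
      - (d*x₁^2 - d*x₁^2 - d*x₃^2 + (10*d-8)*x₁*x₃)/(2*x₁*x₁*x₃))
      = -(2*d*(x₃/x₁)^2 - (10*d-8)*(x₃/x₁) + (8*d-8))/x₁ := by
    field_simp
    ring
  rw [key]
  set u := x₃/x₁ with hu
  rcases hd with hd | hd | hd <;> subst hd <;>
    refine ⟨fun ⟨ha, hb⟩ => div_neg_of_neg_of_pos (by nlinarith) h1,
            fun ⟨ha, hb⟩ => div_pos (by norm_num at hb ⊢; nlinarith) h1,
            fun ha => div_neg_of_neg_of_pos (by norm_num at ha ⊢; nlinarith) h1⟩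
end

section
/- Let d ∈ {2, 4, 8} and let u be a real number with 0 < u < 4(d−1)/d. Define rᵢ = (d·xᵢ² − d·xⱼ² − d·xₖ² + (10d−8)·xⱼ·xₖ)/(2·x₁·x₂·x₃) for {i,j,k} = {1,2,3}, evaluated at (x₁, x₂, x₃) = (1, 1, u). Then r₁ > 0, r₂ > 0 and r₃ > 0. -/
/-- For d ∈ {2,4,8} and 0 < u < 4(d−1)/d, the Ricci tensor of the metric
(1,1,u) is positive definite: r₁, r₂, r₃ > 0. -/
theorem stmt_7 (d u r₁ r₂ r₃ : ℝ) (hd : d = 2 ∨ d = 4 ∨ d = 8)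
    (hu0 : 0 < u) (hu1 : u < 4*(d-1)/d)
    (hr1 : r₁ = (d*(1:ℝ)^2 - d*(1:ℝ)^2 - d*u^2 + (10*d-8)*1*u)/(2*1*1*u))
    (hr2 : r₂ = (d*(1:ℝ)^2 - d*(1:ℝ)^2 - d*u^2 + (10*d-8)*1*u)/(2*1*1*u))
    (hr3 : r₃ = (d*u^2 - d*(1:ℝ)^2 - d*(1:ℝ)^2 + (10*d-8)*1*1)/(2*1*1*u)) :
    0 < r₁ ∧ 0 < r₂ ∧ 0 < r₃ := by
  subst hr1 hr2 hr3
  have h2u : (0:ℝ) < 2*1*1*u := by linarith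
  rcases hd with rfl | rfl | rfl <;> norm_num at hu1 ⊢ <;>
    exact ⟨div_pos (by nlinarith) (by linarith), div_pos (by nlinarith) (by linarith)⟩
end

section
/- Let s be a real number with 0 < s < 1 and set r = √(1 + 8s²) − (1 − 3s). Then r > 0, and with d = 2 and rᵢ = (d·xᵢ² − d·xⱼ² − d·xₖ² + (10d−8)·xⱼ·xₖ)/(2·x₁·x₂·x₃) for {i,j,k} = {1,2,3} evaluated at (x₁, x₂, x₃) = (1, 1+r, s), one has r₁·x₁ = 0, r₂·x₂ > 0 and r₃·x₃ > 0. -/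
/-- For d = 2 and 0 < s < 1, setting r = √(1+8s²) − (1−3s) gives r > 0 and a metric
(1, 1+r, s) on the boundary of positive definite Ricci: r₁x₁ = 0, r₂x₂ > 0, r₃x₃ > 0. -/
theorem stmt_9 (s : ℝ) (hs0 : 0 < s) (hs1 : s < 1)
    (r : ℝ) (hr : r = Real.sqrt (1 + 8*s^2) - (1 - 3*s))
    (d x₁ x₂ x₃ r₁ r₂ r₃ : ℝ) (hd : d = 2)
    (hx1 : x₁ = 1) (hx2 : x₂ = 1 + r) (hx3 : x₃ = s)
    (hr1 : r₁ = (d*x₁^2 - d*x₂^2 - d*x₃^2 + (10*d-8)*x₂*x₃)/(2*x₁*x₂*x₃))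
    (hr2 : r₂ = (d*x₂^2 - d*x₁^2 - d*x₃^2 + (10*d-8)*x₁*x₃)/(2*x₁*x₂*x₃))
    (hr3 : r₃ = (d*x₃^2 - d*x₁^2 - d*x₂^2 + (10*d-8)*x₁*x₂)/(2*x₁*x₂*x₃)) :
    0 < r ∧ r₁ * x₁ = 0 ∧ 0 < r₂ * x₂ ∧ 0 < r₃ * x₃ := by
  subst hd hx1 hx2 hx3 hr1 hr2 hr3
  set q := Real.sqrt (1 + 8*x₃^2) with hq
  have hq0 : 0 ≤ q := Real.sqrt_nonneg _
  have hq2 : q^2 = 1 + 8*x₃^2 := Real.sq_sqrt (by positivity)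
  have hq1 : 1 ≤ q := by nlinarith
  have hre : 1 + r = q + 3*x₃ := by rw [hr]; ring
  have hr0 : 0 < r := by nlinarith
  have hx2pos : 0 < 1 + r := by linarith
  have hden : (2*1*(1+r)*x₃) ≠ 0 := by positivity
  refine ⟨hr0, ?_, ?_, ?_⟩
  · have hnum : 2*1^2 - 2*(1+r)^2 - 2*x₃^2 + (10*2-8)*(1+r)*x₃ = 0 := by
      rw [hre]; nlinarith
    rw [hnum]; simp
  · have hnum : 0 < 2*(1+r)^2 - 2*1^2 - 2*x₃^2 + (10*2-8)*1*x₃ := by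
      rw [hre]; nlinarith
    have := div_pos hnum (by positivity : (0:ℝ) < 2*1*(1+r)*x₃)
    nlinarith [this, mul_pos this hx2pos]
  · have hnum : 0 < 2*x₃^2 - 2*1^2 - 2*(1+r)^2 + (10*2-8)*1*(1+r) := by
      rw [hre]; nlinarith [mul_le_mul_of_nonneg_right hq1 (le_of_lt (by linarith : (0:ℝ) < 1 - x₃))]
    have h2 := div_pos hnum (by positivity : (0:ℝ) < 2*1*(1+r)*x₃)
    nlinarith [mul_pos h2 hs0]
end

section
/- Let s be a real number with 0 < s < 1 and set r = √(1 + 15s²) − (1 − 4s). Then r > 0, and with d = 4 and rᵢ = (d·xᵢ² − d·xⱼ² − d·xₖ² + (10d−8)·xⱼ·xₖ)/(2·x₁·x₂·x₃) for {i,j,k} = {1,2,3} evaluated at (x₁, x₂, x₃) = (1, 1+r, s), one has r₁·x₁ = 0, r₂·x₂ > 0 and r₃·x₃ > 0. -/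
/-- For d = 4 and 0 < s < 1, setting r = √(1+15s²) − (1−4s) gives r > 0 and a metric
(1, 1+r, s) on the boundary of positive definite Ricci: r₁x₁ = 0, r₂x₂ > 0, r₃x₃ > 0. -/
theorem stmt_10 (s : ℝ) (hs0 : 0 < s) (hs1 : s < 1)
    (r : ℝ) (hr : r = Real.sqrt (1 + 15*s^2) - (1 - 4*s))
    (d x₁ x₂ x₃ r₁ r₂ r₃ : ℝ) (hd : d = 4)
    (hx1 : x₁ = 1) (hx2 : x₂ = 1 + r) (hx3 : x₃ = s)
    (hr1 : r₁ = (d*x₁^2 - d*x₂^2 - d*x₃^2 + (10*d-8)*x₂*x₃)/(2*x₁*x₂*x₃))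
    (hr2 : r₂ = (d*x₂^2 - d*x₁^2 - d*x₃^2 + (10*d-8)*x₁*x₃)/(2*x₁*x₂*x₃))
    (hr3 : r₃ = (d*x₃^2 - d*x₁^2 - d*x₂^2 + (10*d-8)*x₁*x₂)/(2*x₁*x₂*x₃)) :
    0 < r ∧ r₁ * x₁ = 0 ∧ 0 < r₂ * x₂ ∧ 0 < r₃ * x₃ := by
  set q := Real.sqrt (1 + 15*s^2) with hq
  have hq2 : q^2 = 1 + 15*s^2 := Real.sq_sqrt (by nlinarith)
  have hq1 : 1 ≤ q := by
    nlinarith [Real.sqrt_nonneg (1 + 15*s^2)]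
  have hrpos : 0 < r := by rw [hr]; nlinarith
  have hx2pos : 0 < x₂ := by rw [hx2]; linarith
  have hden : 0 < 2*x₁*x₂*x₃ := by rw [hx1, hx3]; positivity
  refine ⟨hrpos, ?_, ?_, ?_⟩
  · rw [hr1, hx1, hx2, hx3, hd, hr]
    have hnum : (4*1^2 - 4*(1+(q-(1-4*s)))^2 - 4*s^2 + (10*4-8)*(1+(q-(1-4*s)))*s) = 0 := by
      nlinarith [hq2]
    rw [hnum, zero_div, zero_mul]
  · rw [hr2, hx1, hx2, hx3, hd, hr]
    rw [div_mul_eq_mul_div, lt_div_iff₀ (by nlinarith : (0:ℝ) < 2*1*(1+(q-(1-4*s)))*s)]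
    nlinarith
  · rw [hr3, hx1, hx2, hx3, hd, hr]
    rw [div_mul_eq_mul_div, lt_div_iff₀ (by nlinarith : (0:ℝ) < 2*1*(1+(q-(1-4*s)))*s)]
    nlinarith [mul_pos (sub_pos.2 hs1) (by nlinarith : (0:ℝ) < q - 1 + 0), sq_nonneg (q-1), mul_nonneg (le_of_lt hs0) (sub_nonneg.2 hq1)]
end

section
/- Let s be a real number with 0 < s < 1 and set r = √(1 + (77/4)s²) − (1 − (9/2)s). Then r > 0, and with d = 8 and rᵢ = (d·xᵢ² − d·xⱼ² − d·xₖ² + (10d−8)·xⱼ·xₖ)/(2·x₁·x₂·x₃) for {i,j,k} = {1,2,3} evaluated at (x₁, x₂, x₃) = (1, 1+r, s), one has r₁·x₁ = 0, r₂·x₂ > 0 and r₃·x₃ > 0. -/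
/-- For d = 8 and 0 < s < 1, setting r = √(1+(77/4)s²) − (1−(9/2)s) gives r > 0 and a metric
(1, 1+r, s) on the boundary of positive definite Ricci: r₁x₁ = 0, r₂x₂ > 0, r₃x₃ > 0. -/
theorem stmt_11 (s : ℝ) (hs0 : 0 < s) (hs1 : s < 1)
    (r : ℝ) (hr : r = Real.sqrt (1 + (77/4)*s^2) - (1 - (9/2)*s))
    (d x₁ x₂ x₃ r₁ r₂ r₃ : ℝ) (hd : d = 8)
    (hx1 : x₁ = 1) (hx2 : x₂ = 1 + r) (hx3 : x₃ = s)
    (hr1 : r₁ = (d*x₁^2 - d*x₂^2 - d*x₃^2 + (10*d-8)*x₂*x₃)/(2*x₁*x₂*x₃))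
    (hr2 : r₂ = (d*x₂^2 - d*x₁^2 - d*x₃^2 + (10*d-8)*x₁*x₃)/(2*x₁*x₂*x₃))
    (hr3 : r₃ = (d*x₃^2 - d*x₁^2 - d*x₂^2 + (10*d-8)*x₁*x₂)/(2*x₁*x₂*x₃)) :
    0 < r ∧ r₁ * x₁ = 0 ∧ 0 < r₂ * x₂ ∧ 0 < r₃ * x₃ := by
  set q := Real.sqrt (1 + (77/4)*s^2) with hqdef
  have hq0 : 0 ≤ q := Real.sqrt_nonneg _
  have hq2 : q^2 = 1 + (77/4)*s^2 := Real.sq_sqrt (by positivity)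
  have hq1 : 1 ≤ q := by nlinarith
  have hx2q : x₂ = q + (9/2)*s := by rw [hx2, hr]; ring
  have hrpos : 0 < r := by rw [hr]; nlinarith
  have hx2pos : 0 < x₂ := by rw [hx2q]; positivity
  have hden : 0 < 2*x₁*x₂*x₃ := by rw [hx1, hx3]; positivity
  refine ⟨hrpos, ?_, ?_, ?_⟩
  · have hnum : d*x₁^2 - d*x₂^2 - d*x₃^2 + (10*d-8)*x₂*x₃ = 0 := by
      rw [hd, hx1, hx3, hx2q]; nlinarith [hq2]
    rw [hr1, hnum, zero_div, zero_mul]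
  · have hnum : 0 < d*x₂^2 - d*x₁^2 - d*x₃^2 + (10*d-8)*x₁*x₃ := by
      rw [hd, hx1, hx3, hx2q]; nlinarith [hq2]
    rw [hr2]
    exact mul_pos (div_pos hnum hden) hx2pos
  · have hnum : 0 < d*x₃^2 - d*x₁^2 - d*x₂^2 + (10*d-8)*x₁*x₂ := by
      rw [hd, hx1, hx3, hx2q]
      nlinarith [hq2, mul_nonneg (sub_nonneg.2 hq1) (sub_pos.2 hs1).le]
    rw [hr3]
    exact mul_pos (div_pos hnum hden) (hx3 ▸ hs0)
end

section
/- Fix d = 2 and define, for positive reals (x₁, x₂, x₃), the functions rᵢ(x₁,x₂,x₃) = (d·xᵢ² − d·xⱼ² − d·xₖ² + (10d−8)·xⱼ·xₖ)/(2·x₁·x₂·x₃) for {i,j,k} = {1,2,3}. Let s satisfy 0 < s < 1 − √(5/8) and set r = √(1 + 8s²) − (1 − 3s). Then at the point (x₁, x₂, x₃) = (1, 1+r, s), the quantity −2·Σᵢ rᵢ·xᵢ·(∂r₁/∂xᵢ) is strictly negative. -/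
/-- Coefficient r₁ of the Ricci tensor of the homogeneous metric (x₁,x₂,x₃). -/
noncomputable def ric1 (d x₁ x₂ x₃ : ℝ) : ℝ :=
  (d*x₁^2 - d*x₂^2 - d*x₃^2 + (10*d-8)*x₂*x₃)/(2*x₁*x₂*x₃)

/-- Coefficient r₂ of the Ricci tensor of the homogeneous metric (x₁,x₂,x₃). -/
noncomputable def ric2 (d x₁ x₂ x₃ : ℝ) : ℝ :=
  (d*x₂^2 - d*x₁^2 - d*x₃^2 + (10*d-8)*x₁*x₃)/(2*x₁*x₂*x₃)

/-- Coefficient r₃ of the Ricci tensor of the homogeneous metric (x₁,x₂,x₃). -/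
noncomputable def ric3 (d x₁ x₂ x₃ : ℝ) : ℝ :=
  (d*x₃^2 - d*x₁^2 - d*x₂^2 + (10*d-8)*x₁*x₂)/(2*x₁*x₂*x₃)

lemma deriv_aux (a b c k x : ℝ) (hx : x ≠ 0) (hk : k ≠ 0) :
    deriv (fun y : ℝ => (a*y^2 + b*y + c)/(k*y)) x
      = ((2*a*x + b)*(k*x) - (a*x^2 + b*x + c)*k)/(k*x)^2 := by
  have h1 : HasDerivAt (fun y : ℝ => a*y^2 + b*y + c) (2*a*x + b) x := by
    have := (((hasDerivAt_pow 2 x).const_mul a).add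
      ((hasDerivAt_id' (𝕜 := ℝ) x).const_mul b)).add_const c
    exact this.congr_deriv (by push_cast; ring)
  have h2 : HasDerivAt (fun y : ℝ => k*y) k x := by
    simpa using (hasDerivAt_id' (𝕜 := ℝ) x).const_mul k
  exact (h1.div h2 (mul_ne_zero hk hx)).deriv

/-- For d = 2 (SU(3)/T²): at the boundary point (1, 1+r, s) with
r = √(1+8s²) − (1−3s) and 0 < s < 1 − √(5/8), the derivative of r₁ along the
Ricci flow, −2·Σᵢ rᵢ·xᵢ·(∂r₁/∂xᵢ), is strictly negative. -/
theorem stmt_12 (s : ℝ) (hs0 : 0 < s) (hs1 : s < 1 - Real.sqrt (5/8))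
    (r x₁ x₂ x₃ : ℝ) (hr : r = Real.sqrt (1 + 8*s^2) - (1 - 3*s))
    (hx1 : x₁ = 1) (hx2 : x₂ = 1 + r) (hx3 : x₃ = s) :
    -2 * (ric1 2 x₁ x₂ x₃ * x₁ * deriv (fun y => ric1 2 y x₂ x₃) x₁
        + ric2 2 x₁ x₂ x₃ * x₂ * deriv (fun y => ric1 2 x₁ y x₃) x₂
        + ric3 2 x₁ x₂ x₃ * x₃ * deriv (fun y => ric1 2 x₁ x₂ y) x₃) < 0 := by
  rw [hx1, hx2, hx3, hr]
  set q := Real.sqrt (1 + 8*s^2) with hqdef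
  have hq0 : 0 < q := Real.sqrt_pos.mpr (by positivity)
  have hq2 : q^2 = 1 + 8*s^2 := Real.sq_sqrt (by positivity)
  have ht2 : (Real.sqrt (5/8))^2 = 5/8 := Real.sq_sqrt (by norm_num)
  have ht0 : (0:ℝ) ≤ Real.sqrt (5/8) := Real.sqrt_nonneg _
  have hs21 : s < 21/100 := by nlinarith [ht2, ht0, hs1]
  have h83 : 0 < 8*s^2 - 16*s + 3 := by nlinarith [ht2, ht0, hs1]
  have hu0 : 0 < 3*s + q := by linarith
  have hune : (3*s + q) ≠ 0 := ne_of_gt hu0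
  have hsne : s ≠ 0 := ne_of_gt hs0
  rw [show 1 + (q - (1 - 3*s)) = 3*s + q from by ring]
  -- the first Ricci coefficient vanishes at this point
  have hr1 : ric1 2 1 (3*s+q) s = 0 := by
    rw [ric1, show 2*(1:ℝ)^2 - 2*(3*s+q)^2 - 2*s^2 + (10*2-8)*(3*s+q)*s = 0 from by
      linear_combination (-2:ℝ)*hq2, zero_div]
  -- the two derivatives
  have hd2 : deriv (fun y => ric1 2 1 y s) (3*s+q) = (12*s - 4*(3*s+q))/((2*s)*(3*s+q)) := by
    have e2 : (fun y => ric1 2 1 y s)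
        = fun y : ℝ => ((-2)*y^2 + (12*s)*y + (2 - 2*s^2))/((2*s)*y) := by
      funext y; rw [ric1]; ring
    rw [e2, deriv_aux _ _ _ _ _ hune (by positivity),
      show (-2)*(3*s+q)^2 + (12*s)*(3*s+q) + (2 - 2*s^2) = 0 from by
        linear_combination (-2:ℝ)*hq2]
    field_simp
    ring
  have hd3 : deriv (fun y => ric1 2 1 (3*s+q) y) s = (12*(3*s+q) - 4*s)/((2*(3*s+q))*s) := by
    have e3 : (fun y => ric1 2 1 (3*s+q) y)
        = fun y : ℝ => ((-2)*y^2 + (12*(3*s+q))*y + (2 - 2*(3*s+q)^2))/((2*(3*s+q))*y) := by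
      funext y; rw [ric1]; ring
    rw [e3, deriv_aux _ _ _ _ _ hsne (by positivity),
      show (-2)*s^2 + (12*(3*s+q))*s + (2 - 2*(3*s+q)^2) = 0 from by
        linear_combination (-2:ℝ)*hq2]
    field_simp
    ring
  rw [hr1, hd2, hd3]
  -- positivity of the remaining sum
  have hP : 0 < 3 - 17*s + 60*s^2 - 136*s^3 := by
    nlinarith [mul_pos (mul_pos hs0 hs0) hs0, sq_nonneg (s - 27/100), mul_pos hs0 hs0]
  have hRneg : -3 + 21*s - 48*s^2 < 0 := by nlinarith [sq_nonneg (s - 7/32)]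
  have hW : (3 - 17*s + 60*s^2 - 136*s^3)^2 - q^2*(-3 + 21*s - 48*s^2)^2
      = 8*s*(1-s)^2*(1+s)*(8*s^2 - 16*s + 3) := by
    linear_combination (-(-3 + 21*s - 48*s^2)^2)*hq2
  have hWpos : 0 < (3 - 17*s + 60*s^2 - 136*s^3)^2 - q^2*(-3 + 21*s - 48*s^2)^2 := by
    rw [hW]
    have h1s : (0:ℝ) < 1 - s := by linarith
    exact mul_pos (mul_pos (mul_pos (by linarith : (0:ℝ) < 8*s)
      (pow_pos h1s 2)) (by linarith : (0:ℝ) < 1 + s)) h83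
  have hPR : 0 < (3 - 17*s + 60*s^2 - 136*s^3) - q*(-3 + 21*s - 48*s^2) := by
    nlinarith [mul_pos hq0 (by linarith : (0:ℝ) < -(-3 + 21*s - 48*s^2))]
  have hG : 0 < (3 - 17*s + 60*s^2 - 136*s^3) + q*(-3 + 21*s - 48*s^2) := by
    have e : (3 - 17*s + 60*s^2 - 136*s^3) + q*(-3 + 21*s - 48*s^2)
        = ((3 - 17*s + 60*s^2 - 136*s^3)^2 - q^2*(-3 + 21*s - 48*s^2)^2)
          / ((3 - 17*s + 60*s^2 - 136*s^3) - q*(-3 + 21*s - 48*s^2)) := by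
      rw [eq_div_iff (ne_of_gt hPR)]; ring
    rw [e]; exact div_pos hWpos hPR
  have key : ric2 2 1 (3*s+q) s * (3*s+q) * ((12*s - 4*(3*s+q))/((2*s)*(3*s+q)))
      + ric3 2 1 (3*s+q) s * s * ((12*(3*s+q) - 4*s)/((2*(3*s+q))*s))
      = 8*((3 - 17*s + 60*s^2 - 136*s^3) + q*(-3 + 21*s - 48*s^2))/((3*s+q)^2*s) := by
    rw [ric2, ric3]
    field_simp
    linear_combination ((-8)*q^2 + (-96)*s*q + (-480)*s^2 + 96*s)*hq2
  have hpos : 0 < 8*((3 - 17*s + 60*s^2 - 136*s^3) + q*(-3 + 21*s - 48*s^2))/((3*s+q)^2*s) :=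
    div_pos (by linarith) (by positivity)
  rw [← key] at hpos
  linarith [hpos]
end

section
/- Fix d = 4 and define, for positive reals (x₁, x₂, x₃), the functions rᵢ(x₁,x₂,x₃) = (d·xᵢ² − d·xⱼ² − d·xₖ² + (10d−8)·xⱼ·xₖ)/(2·x₁·x₂·x₃) for {i,j,k} = {1,2,3}. Let s satisfy 0 < s < (30 + 5√21 − 3√(5(21 + 4√21)))/30 and set r = √(1 + 15s²) − (1 − 4s). Then at the point (x₁, x₂, x₃) = (1, 1+r, s), the quantity −2·Σᵢ rᵢ·xᵢ·(∂r₁/∂xᵢ) is strictly negative. -/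
/-- Derivative of a quadratic-over-linear rational function. -/
lemma dr_aux (a b c e y : ℝ) (hy : e*y ≠ 0) :
    deriv (fun t => (a*t^2 + b*t + c)/(e*t)) y = (a*y^2 - c)/(e*y^2) := by
  have h1 : HasDerivAt (fun t:ℝ => a*t^2 + b*t + c) (a*(2*y)+b) y := by
    have := (((hasDerivAt_pow 2 y).const_mul a).add ((hasDerivAt_id y).const_mul b)).add_const c
    simpa [mul_comm] using this
  have h2 : HasDerivAt (fun t:ℝ => e*t) e y := by
    simpa using (hasDerivAt_id y).const_mul e
  rw [show (fun t => (a*t^2 + b*t + c)/(e*t)) = (fun t => a*t^2 + b*t + c) / (fun t => e*t) from rfl,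
    (h1.div h2 hy).deriv]
  have he : e ≠ 0 := left_ne_zero_of_mul hy
  have hy' : y ≠ 0 := right_ne_zero_of_mul hy
  field_simp; ring

set_option maxHeartbeats 1000000 in
/-- For d = 4 (Sp(3)/Sp(1)³): at the boundary point (1, 1+r, s) with
r = √(1+15s²) − (1−4s) and 0 < s < (30+5√21−3√(5(21+4√21)))/30, the derivative of r₁ along the
Ricci flow, −2·Σᵢ rᵢ·xᵢ·(∂r₁/∂xᵢ), is strictly negative. -/
theorem stmt_13 (s : ℝ) (hs0 : 0 < s) (hs1 : s < (30 + 5*Real.sqrt 21 - 3*Real.sqrt (5*(21 + 4*Real.sqrt 21)))/30)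
    (r x₁ x₂ x₃ : ℝ) (hr : r = Real.sqrt (1 + 15*s^2) - (1 - 4*s))
    (hx1 : x₁ = 1) (hx2 : x₂ = 1 + r) (hx3 : x₃ = s) :
    -2 * (ric1 4 x₁ x₂ x₃ * x₁ * deriv (fun y => ric1 4 y x₂ x₃) x₁
        + ric2 4 x₁ x₂ x₃ * x₂ * deriv (fun y => ric1 4 x₁ y x₃) x₂
        + ric3 4 x₁ x₂ x₃ * x₃ * deriv (fun y => ric1 4 x₁ x₂ y) x₃) < 0 := by
  subst hx1 hx2 hr
  rw [hx3]
  set u := Real.sqrt (1 + 15*s^2) with hu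
  have hu2 : u^2 = 1 + 15*s^2 := Real.sq_sqrt (by positivity)
  have hu0 : 0 ≤ u := Real.sqrt_nonneg _
  have hu1 : 1 ≤ u := by nlinarith [hu2, hu0, sq_nonneg s]
  have hX : 1 + (u - (1 - 4*s)) = u + 4*s := by ring
  rw [hX]
  have hXpos : 0 < u + 4*s := by linarith
  have hs' : s ≠ 0 := ne_of_gt hs0
  have hX' : u + 4*s ≠ 0 := ne_of_gt hXpos
  -- bounds coming from √21 and the nested radical
  set c := Real.sqrt 21 with hc
  have hc2 : c^2 = 21 := Real.sq_sqrt (by norm_num)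
  have hc0 : 0 ≤ c := Real.sqrt_nonneg _
  have hclow : (4.58:ℝ) < c := by nlinarith [hc2, hc0]
  have hchigh : c < 4.5826 := by nlinarith [hc2, hc0]
  set w := Real.sqrt (5*(21 + 4*c)) with hw
  have hw2 : w^2 = 5*(21 + 4*c) := Real.sq_sqrt (by nlinarith)
  have hw0 : 0 ≤ w := Real.sqrt_nonneg _
  have h30 : 30*s < 30 + 5*c - 3*w := by
    have := (div_lt_div_iff_of_pos_right (c := (30:ℝ)) (by norm_num)).mpr hs1
    nlinarith [hs1]
  -- s is small
  have h3w : 19.155 + 5*c < 3*w := by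
    nlinarith [hw2, hw0, hclow, hchigh, sq_nonneg (3*w - (19.155 + 5*c))]
  have hsmall : s < 0.3615 := by linarith
  -- the conjugate quadratics
  have hf1 : 0 < 30 + 5*c - 30*s - 3*w := by linarith
  have hf2 : 0 < 30 + 5*c - 30*s + 3*w := by linarith
  have hq1 : 0 < 15*s^2 - (30 + 5*c)*s + 8 + 2*c := by
    nlinarith [mul_pos hf1 hf2, hw2]
  have hq2 : 15*s^2 - (30 - 5*c)*s + 8 - 2*c < 0 := by
    have h15 : 15*s < 30 - 5*c := by linarith
    nlinarith [mul_pos hs0 (sub_pos.mpr h15), hclow]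
  -- A > 0
  have hA : 0 < 12 - 62*s + 420*s^2 - 930*s^3 := by
    linarith [mul_nonneg (sub_pos.mpr hsmall).le (sq_nonneg (s - 0.045)), sq_nonneg s, hsmall.le]
  -- A² - u²B² = 4(s²-1)q₁q₂ > 0
  have hQ : (12 - 62*s + 420*s^2 - 930*s^3)^2 - u^2*(8 - 108*s + 240*s^2)^2
      = 4*(s^2 - 1)*(15*s^2 - (30 + 5*c)*s + 8 + 2*c)*(15*s^2 - (30 - 5*c)*s + 8 - 2*c) := by
    linear_combination (-(8 - 108*s + 240*s^2)^2)*hu2 + 4*(s^2 - 1)*(5*s - 2)^2*hc2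
  have hs21 : s^2 < 1 := by nlinarith
  have hQpos : 0 < (12 - 62*s + 420*s^2 - 930*s^3)^2 - u^2*(8 - 108*s + 240*s^2)^2 := by
    rw [hQ]
    have := mul_pos (mul_pos (by nlinarith : (0:ℝ) < 4*(1 - s^2)) hq1) (neg_pos.mpr hq2)
    nlinarith [this]
  -- key positivity: A - uB > 0
  have hP : 0 < (12 - 62*s + 420*s^2 - 930*s^3) - u*(8 - 108*s + 240*s^2) := by
    by_contra h
    push_neg at h
    nlinarith [hQpos, hA]
  -- compute the derivatives
  have e1 : (fun y => ric1 4 y (u+4*s) s)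
      = fun t => (4*t^2 + 0*t + (-4*(u+4*s)^2 - 4*s^2 + 32*(u+4*s)*s))/((2*(u+4*s)*s)*t) := by
    funext t; simp only [ric1]; ring
  have e2 : (fun y => ric1 4 1 y s)
      = fun t => ((-4)*t^2 + (32*s)*t + (4 - 4*s^2))/((2*s)*t) := by
    funext t; simp only [ric1]; ring
  have e3 : (fun y => ric1 4 1 (u+4*s) y)
      = fun t => ((-4)*t^2 + (32*(u+4*s))*t + (4 - 4*(u+4*s)^2))/((2*(u+4*s))*t) := by
    funext t; simp only [ric1]; ring
  rw [e1, e2, e3, dr_aux _ _ _ _ _ (by simp [hX', hs'] : (2*(u+4*s)*s)*(1:ℝ) ≠ 0),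
      dr_aux _ _ _ _ _ (by positivity : (2*s)*(u+4*s) ≠ 0),
      dr_aux _ _ _ _ _ (by positivity : (2*(u+4*s))*s ≠ 0)]
  simp only [ric1, ric2, ric3]
  -- reduce to a single fraction
  suffices h : (-2) * (((4 - 4*(u+4*s)^2 - 4*s^2 + 32*(u+4*s)*s)
        * (4 + 4*(u+4*s)^2 + 4*s^2 - 32*(u+4*s)*s)
      + (4*(u+4*s)^2 - 4 - 4*s^2 + 32*s) * (-4*(u+4*s)^2 - 4 + 4*s^2)
      + (4*s^2 - 4 - 4*(u+4*s)^2 + 32*(u+4*s)) * (-4*s^2 - 4 + 4*(u+4*s)^2))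
      / (4*s^2*(u+4*s)^2)) < 0 by
    convert h using 1
    field_simp
    ring
  have hnum : (4 - 4*(u+4*s)^2 - 4*s^2 + 32*(u+4*s)*s)
        * (4 + 4*(u+4*s)^2 + 4*s^2 - 32*(u+4*s)*s)
      + (4*(u+4*s)^2 - 4 - 4*s^2 + 32*s) * (-4*(u+4*s)^2 - 4 + 4*s^2)
      + (4*s^2 - 4 - 4*(u+4*s)^2 + 32*(u+4*s)) * (-4*s^2 - 4 + 4*(u+4*s)^2)
      = 64*s*((12 - 62*s + 420*s^2 - 930*s^3) - u*(8 - 108*s + 240*s^2)) := by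
    linear_combination (-48 + 128*u - 48*u^2 + 1408*s - 512*s*u - 3248*s^2)*hu2
  rw [hnum, ← mul_div_assoc]
  apply div_neg_of_neg_of_pos
  · nlinarith [mul_pos hs0 hP]
  · positivity
end

section
/- For every real number s with 0 < s < 1, one has s²/4 < (s − 2 + 2√(1 − s + s²))/3 < s²/3. -/
/-- For 0 < s < 1, one has s²/4 < (s − 2 + 2√(1 − s + s²))/3 < s²/3. -/
theorem stmt_15 (s : ℝ) (hs0 : 0 < s) (hs1 : s < 1) :
    s^2/4 < (s - 2 + 2*Real.sqrt (1 - s + s^2))/3 ∧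
    (s - 2 + 2*Real.sqrt (1 - s + s^2))/3 < s^2/3 := by
  set t := Real.sqrt (1 - s + s^2) with ht
  have hpos : (0:ℝ) < 1 - s + s^2 := by nlinarith
  have ht0 : 0 ≤ t := Real.sqrt_nonneg _
  have ht2 : t^2 = 1 - s + s^2 := Real.sq_sqrt hpos.le
  constructor
  · have hsq : (3*s^2/4 - s + 2)^2 < (2*t)^2 := by
      have h3 : 0 < s^3 := pow_pos hs0 3
      nlinarith [ht2]
    have h1 : 3*s^2/4 - s + 2 < 2*t :=
      lt_of_pow_lt_pow_left₀ 2 (by linarith) hsq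
    linarith
  · have h2 : 2*t < s^2 - s + 2 := by
      nlinarith [sq_nonneg (2*t - (s^2 - s + 2)), sq_nonneg (s*(s-1)), mul_pos hs0 (sub_pos.mpr hs1)]
    linarith
end

section
/- Let d ∈ {2, 4, 8} and let x₁, x₂, x₃ : [0,T) → ℝ be continuously differentiable functions with strictly positive values satisfying the Ricci flow ODE xᵢ'(t) = −2·rᵢ(t)·xᵢ(t), where rᵢ(t) = (d·xᵢ(t)² − d·xⱼ(t)² − d·xₖ(t)² + (10d−8)·xⱼ(t)·xₖ(t))/(2·x₁(t)·x₂(t)·x₃(t)) for {i,j,k} = {1,2,3}. Suppose x₁(t) = x₂(t) for all t and 0 < x₃(0)/x₁(0) < 4(d−1)/d. Then x₃(t)/x₁(t) < 4(d−1)/d for all t ∈ [0,T). -/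
/-- On the locus x₁ = x₂, the region x₃/x₁ < 4(d−1)/d is forward invariant
under the Ricci flow ODE on [0,T), for d ∈ {2,4,8}. -/
theorem stmt_17 (d T : ℝ) (hd : d = 2 ∨ d = 4 ∨ d = 8)
    (x₁ x₂ x₃ r₁ r₂ r₃ : ℝ → ℝ)
    (hpos : ∀ t ∈ Set.Ico 0 T, 0 < x₁ t ∧ 0 < x₂ t ∧ 0 < x₃ t)
    (hC1 : ContDiffOn ℝ 1 x₁ (Set.Ico 0 T) ∧ ContDiffOn ℝ 1 x₂ (Set.Ico 0 T) ∧
      ContDiffOn ℝ 1 x₃ (Set.Ico 0 T))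
    (hr1 : ∀ t, r₁ t = (d*(x₁ t)^2 - d*(x₂ t)^2 - d*(x₃ t)^2
      + (10*d-8)*(x₂ t)*(x₃ t))/(2*(x₁ t)*(x₂ t)*(x₃ t)))
    (hr2 : ∀ t, r₂ t = (d*(x₂ t)^2 - d*(x₁ t)^2 - d*(x₃ t)^2
      + (10*d-8)*(x₁ t)*(x₃ t))/(2*(x₁ t)*(x₂ t)*(x₃ t)))
    (hr3 : ∀ t, r₃ t = (d*(x₃ t)^2 - d*(x₁ t)^2 - d*(x₂ t)^2
      + (10*d-8)*(x₁ t)*(x₂ t))/(2*(x₁ t)*(x₂ t)*(x₃ t)))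
    (hode1 : ∀ t ∈ Set.Ico 0 T, HasDerivAt x₁ (-2 * r₁ t * x₁ t) t)
    (hode2 : ∀ t ∈ Set.Ico 0 T, HasDerivAt x₂ (-2 * r₂ t * x₂ t) t)
    (hode3 : ∀ t ∈ Set.Ico 0 T, HasDerivAt x₃ (-2 * r₃ t * x₃ t) t)
    (heq : ∀ t ∈ Set.Ico 0 T, x₁ t = x₂ t)
    (hinit : 0 < x₃ 0 / x₁ 0 ∧ x₃ 0 / x₁ 0 < 4*(d-1)/d) :
    ∀ t ∈ Set.Ico 0 T, x₃ t / x₁ t < 4*(d-1)/d := by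
  have hd0 : (0:ℝ) < d := by rcases hd with h | h | h <;> rw [h] <;> norm_num
  set c : ℝ := 4*(d-1)/d with hc
  set w : ℝ → ℝ := fun t => c - x₃ t / x₁ t with hwdef
  set g : ℝ → ℝ := fun t => 2*d*(x₃ t / x₁ t - 1) / x₁ t with hgdef
  -- derivative of w
  have hw : ∀ t ∈ Set.Ico 0 T, HasDerivAt w (-(g t * w t)) t := by
    intro t ht
    obtain ⟨h1, h2, h3⟩ := hpos t ht
    have hx12 := heq t ht
    have hu : HasDerivAt (fun s => x₃ s / x₁ s)
        (((-2 * r₃ t * x₃ t) * x₁ t - x₃ t * (-2 * r₁ t * x₁ t)) / (x₁ t)^2) t :=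
      (hode3 t ht).div (hode1 t ht) h1.ne'
    have hval : ((-2 * r₃ t * x₃ t) * x₁ t - x₃ t * (-2 * r₁ t * x₁ t)) / (x₁ t)^2
        = g t * w t := by
      rw [hgdef, hwdef, hr1 t, hr3 t, hc, ← hx12]
      field_simp
      ring
    have h2 := hu.const_sub c
    rw [hwdef]
    convert h2 using 1
    all_goals first | rfl | rw [hval]
  -- continuity
  have hcx1 := hC1.1.continuousOn
  have hcx3 := hC1.2.2.continuousOn
  have hcu : ContinuousOn (fun s => x₃ s / x₁ s) (Set.Ico 0 T) :=
    hcx3.div hcx1 (fun t ht => (hpos t ht).1.ne')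
  have hcw : ContinuousOn w (Set.Ico 0 T) := continuousOn_const.sub hcu
  have hcg : ContinuousOn g (Set.Ico 0 T) :=
    ((continuousOn_const.mul (hcu.sub continuousOn_const))).div hcx1
      (fun t ht => (hpos t ht).1.ne')
  intro t₁ ht₁
  by_contra hcon
  push_neg at hcon
  have hT0 : (0:ℝ) < T := lt_of_le_of_lt ht₁.1 ht₁.2
  have h0mem : (0:ℝ) ∈ Set.Ico 0 T := ⟨le_refl 0, hT0⟩
  have hw0 : 0 < w 0 := by simp only [hwdef]; linarith [hinit.2]
  have hwt₁ : w t₁ ≤ 0 := by simp only [hwdef]; linarith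
  have hsub : Set.Icc 0 t₁ ⊆ Set.Ico 0 T := fun s hs => ⟨hs.1, lt_of_le_of_lt hs.2 ht₁.2⟩
  -- intermediate value: a zero t₀ of w in [0, t₁]
  have hivt : (0:ℝ) ∈ w '' Set.Icc 0 t₁ := by
    apply intermediate_value_Icc' ht₁.1 (hcw.mono hsub)
    exact ⟨hwt₁, le_of_lt hw0⟩
  obtain ⟨t₀, ht₀, hwt₀⟩ := hivt
  have hsub' : Set.Icc 0 t₀ ⊆ Set.Ico 0 T := fun s hs =>
    ⟨hs.1, lt_of_le_of_lt (hs.2.trans ht₀.2) ht₁.2⟩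
  -- bound for g on [0, t₀]
  obtain ⟨K, hK⟩ := (isCompact_Icc (a := (0:ℝ)) (b := t₀)).exists_bound_of_continuousOn
    (hcg.mono hsub')
  -- time-reversed function
  set f : ℝ → ℝ := fun s => w (t₀ - s) with hfdef
  have hfc : ContinuousOn f (Set.Icc 0 t₀) := by
    apply (hcw.mono hsub').comp (continuousOn_const.sub continuousOn_id)
    intro s hs
    simp only [Set.mem_Icc, Pi.sub_apply, id_eq] at hs ⊢
    constructor
    · linarith [hs.2]
    · linarith [hs.1]
  have hf' : ∀ s ∈ Set.Ico 0 t₀, HasDerivWithinAt f (g (t₀ - s) * w (t₀ - s)) (Set.Ici s) s := by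
    intro s hs
    have hmem : t₀ - s ∈ Set.Ico 0 T := hsub' ⟨by linarith [hs.2], by linarith [hs.1]⟩
    have hcomp : HasDerivAt (fun s => t₀ - s) (-1 : ℝ) s := by
      simpa using (hasDerivAt_id s).const_sub t₀
    have := (hw (t₀ - s) hmem).comp s hcomp
    have h2 : HasDerivAt f (g (t₀ - s) * w (t₀ - s)) s := by
      convert this using 1 <;> first | rfl | ring
    exact h2.hasDerivWithinAt
  have hbound : ∀ s ∈ Set.Ico 0 t₀, ‖g (t₀ - s) * w (t₀ - s)‖ ≤ K * ‖f s‖ + 0 := by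
    intro s hs
    have hmem : t₀ - s ∈ Set.Icc 0 t₀ := ⟨by linarith [hs.2], by linarith [hs.1]⟩
    rw [norm_mul, add_zero, hfdef]
    exact mul_le_mul_of_nonneg_right (hK _ hmem) (norm_nonneg _)
  have hfa : ‖f 0‖ ≤ 0 := by simp [hfdef, hwt₀]
  have := norm_le_gronwallBound_of_norm_deriv_right_le hfc hf' hfa hbound t₀
    ⟨ht₀.1, le_refl t₀⟩
  rw [gronwallBound_ε0] at this
  simp only [hfdef, sub_self, zero_mul, Real.norm_eq_abs] at this
  have : w 0 = 0 := by
    have := abs_nonpos_iff.mp (le_trans this (by norm_num))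
    simpa using this
  linarith
end
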